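/- arXiv:2104.02996 — 3 statements merged into one kernel-verified Lean document; each statement's English description precedes it below -/
import Mathlib

section
/- Let τ be a nonempty set, p ∈ [1,∞], and φ : τ → τ such that there exists N ∈ ℕ with card(φ⁻¹({α})) ≤ N for all α ∈ τ. Let ℰ be the set of pairs (ψ, λ) of continuous linear operators ψ, λ : ℓ^p(τ) → ℓ^p(τ) such that σ_φ↾ℓ^p(τ) is a (ψ,λ)-derivation, i.e., σ_φ(xy) = σ_φ(x)·ψ(y) + λ(x)·σ_φ(y) for all x, y ∈ ℓ^p(τ). Then the cardinality of ℰ equals 2^{max(ℵ₀, card τ)}. -/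
/-!
Testing the derivation identity on `x * e = e * x = x (φ α) • e`, with `e` the unit vector at
`φ α`, shows that a pair `(ψ, λ)` in `ℰ` is determined by the weight
`c α = λ e_{φ α} α`: `λ x α = c α * x (φ α)` and `ψ x α = (1 - c α) * x (φ α)`, and `c` is bounded
by `‖λ‖`. Conversely, as the fibres of `φ` have at most `N` points, every `c ∈ ℓ^∞(τ)` yields the
bounded weighted composition operators `x ↦ c * (x ∘ φ)` and `x ↦ (1 - c) * (x ∘ φ)`, which form
such a pair. So `ℰ ≃ ℓ^∞(τ)`, and `card ℓ^∞(τ)` lies between `card (τ → [0, 1])` and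
`card (τ → ℂ)`, both equal to `2 ^ max(ℵ₀, card τ)`.
-/

open scoped ENNReal

open scoped Finset in
theorem Finset.sum_comp_le_mul_sum_image {α β : Type*} [DecidableEq β] {φ : α → β} {N : ℕ}
    (hφ : ∀ b, (φ ⁻¹' {b}).encard ≤ N) {g : β → ℝ} (hg : ∀ b, 0 ≤ g b) (s : Finset α) :
    ∑ a ∈ s, g (φ a) ≤ N * ∑ b ∈ s.image φ, g b := by
  rw [Finset.sum_comp, Finset.mul_sum]
  refine Finset.sum_le_sum fun b _ => ?_
  have hfiber : #{a ∈ s | φ a = b} ≤ N := by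
    have hsub : (↑{a ∈ s | φ a = b} : Set α) ⊆ φ ⁻¹' {b} := fun a ha => by simp_all
    have := (Set.encard_le_encard hsub).trans (hφ b)
    rwa [Set.encard_coe_eq_coe_finsetCard, Nat.cast_le] at this
  rw [nsmul_eq_mul]
  gcongr
  exact hg b

namespace lp

variable {α β 𝕜 E : Type*} [NormedAddCommGroup E] {p : ℝ≥0∞} {φ : α → β} {N : ℕ}

theorem sum_norm_comp_rpow_le (hφ : ∀ b, (φ ⁻¹' {b}).encard ≤ N) (hp : 0 < p.toReal)
    (x : lp (fun _ : β => E) p) (s : Finset α) :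
    ∑ a ∈ s, ‖x (φ a)‖ ^ p.toReal ≤ N * ‖x‖ ^ p.toReal := by
  classical
  calc ∑ a ∈ s, ‖x (φ a)‖ ^ p.toReal
      ≤ N * ∑ b ∈ s.image φ, ‖x b‖ ^ p.toReal :=
        Finset.sum_comp_le_mul_sum_image hφ (g := fun b => ‖x b‖ ^ p.toReal)
          (fun _ => by positivity) s
    _ ≤ N * ‖x‖ ^ p.toReal := by gcongr; exact sum_rpow_le_norm_rpow hp x _

theorem memℓp_comp [Fact (1 ≤ p)] (hφ : ∀ b, (φ ⁻¹' {b}).encard ≤ N)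
    (x : lp (fun _ : β => E) p) : Memℓp (fun a => x (φ a)) p := by
  have hp0 : p ≠ 0 := (zero_lt_one.trans_le Fact.out).ne'
  rcases eq_or_ne p ∞ with rfl | hp
  · exact memℓp_infty ⟨‖x‖, by rintro - ⟨a, rfl⟩; exact norm_apply_le_norm hp0 x (φ a)⟩
  · exact memℓp_gen' (sum_norm_comp_rpow_le hφ (ENNReal.toReal_pos hp0 hp) x)

theorem exists_norm_comp_le [Fact (1 ≤ p)] (hφ : ∀ b, (φ ⁻¹' {b}).encard ≤ N) :
    ∃ C, ∀ (x : lp (fun _ : β => E) p) (y : lp (fun _ : α => E) p),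
      (∀ a, y a = x (φ a)) → ‖y‖ ≤ C * ‖x‖ := by
  have hp0 : p ≠ 0 := (zero_lt_one.trans_le Fact.out).ne'
  rcases eq_or_ne p ∞ with rfl | hp
  · refine ⟨1, fun x y hy => ?_⟩
    rw [one_mul]
    exact norm_le_of_forall_le (norm_nonneg x) fun a => hy a ▸ norm_apply_le_norm hp0 x (φ a)
  · have hp' : 0 < p.toReal := ENNReal.toReal_pos hp0 hp
    refine ⟨(N : ℝ) ^ p.toReal⁻¹, fun x y hy =>
      norm_le_of_forall_sum_le hp' (by positivity) fun s => ?_⟩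
    rw [Real.mul_rpow (by positivity) (norm_nonneg x), Real.rpow_inv_rpow (by positivity) hp'.ne']
    simpa only [hy] using sum_norm_comp_rpow_le hφ hp' x s

theorem coeFn_single_eq_mul_single_one {R : Type*} [NormedRing R] [DecidableEq α]
    (x : lp (fun _ : α => R) p) (i : α) :
    ⇑(lp.single (E := fun _ => R) p i (x i)) = ⇑x * ⇑(lp.single (E := fun _ => R) p i 1) := by
  funext j
  rcases eq_or_ne j i with rfl | hj
  · simp
  · simp [hj]

variable [NontriviallyNormedField 𝕜] [NormedSpace 𝕜 E] [Fact (1 ≤ p)]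

variable (𝕜 E p) in
noncomputable def compCLM (hφ : ∀ b, (φ ⁻¹' {b}).encard ≤ N) :
    lp (fun _ : β => E) p →L[𝕜] lp (fun _ : α => E) p :=
  LinearMap.mkContinuousOfExistsBound
    { toFun x := ⟨fun a => x (φ a), memℓp_comp hφ x⟩
      map_add' _ _ := rfl
      map_smul' _ _ := rfl }
    (have ⟨C, hC⟩ := exists_norm_comp_le (E := E) (p := p) hφ; ⟨C, fun x => hC x _ fun _ => rfl⟩)

variable (E p) in
noncomputable def weightedCompCLM (c : lp (fun _ : α => 𝕜) ∞)
    (hφ : ∀ b, (φ ⁻¹' {b}).encard ≤ N) : lp (fun _ : β => E) p →L[𝕜] lp (fun _ : α => E) p :=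
  (mapCLM p (fun a => c a • ContinuousLinearMap.id 𝕜 E) (norm_nonneg c) fun a =>
    calc ‖c a • ContinuousLinearMap.id 𝕜 E‖ ≤ ‖c a‖ * ‖ContinuousLinearMap.id 𝕜 E‖ :=
          norm_smul_le _ _
      _ ≤ ‖c a‖ := mul_le_of_le_one_right (norm_nonneg _) ContinuousLinearMap.norm_id_le
      _ ≤ ‖c‖ := norm_apply_le_norm ENNReal.top_ne_zero c a).comp
    (compCLM 𝕜 E p hφ)

@[simp]
theorem weightedCompCLM_apply (c : lp (fun _ : α => 𝕜) ∞) (hφ : ∀ b, (φ ⁻¹' {b}).encard ≤ N)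
    (x : lp (fun _ : β => E) p) (a : α) :
    weightedCompCLM E p c hφ x a = c a • x (φ a) := rfl

theorem norm_apply_single_one_le [DecidableEq α]
    (T : lp (fun _ : α => 𝕜) p →L[𝕜] lp (fun _ : α => 𝕜) p) (i j : α) :
    ‖T (lp.single p i 1) j‖ ≤ ‖T‖ :=
  calc ‖T (lp.single p i 1) j‖ ≤ ‖T (lp.single p i 1)‖ :=
        norm_apply_le_norm (zero_lt_one.trans_le Fact.out).ne' _ j
    _ ≤ ‖T‖ * ‖lp.single (E := fun _ => 𝕜) p i 1‖ := T.le_opNorm _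
    _ = ‖T‖ := by rw [lp.norm_single (zero_lt_one.trans_le (Fact.out : 1 ≤ p)), norm_one, mul_one]

end lp

section TwistedDerivation

variable {τ 𝕜 : Type*} [NontriviallyNormedField 𝕜] {p : ℝ≥0∞} {φ : τ → τ} {N : ℕ}

-- The paper's `(ψ, λ)`-derivations, with `χ` for `λ`. As `ℓ^p(τ)` is not a ring in Mathlib,
-- a product `x * y` is any `z` with `⇑z = ⇑x * ⇑y`.
def IsTwistedDerivation (S ψ χ : lp (fun _ : τ => 𝕜) p → lp (fun _ : τ => 𝕜) p) : Prop :=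
  ∀ x y z : lp (fun _ : τ => 𝕜) p, ⇑z = ⇑x * ⇑y →
    ⇑(S z) = ⇑(S x) * ⇑(ψ y) + ⇑(χ x) * ⇑(S y)

namespace IsTwistedDerivation

variable {S ψ χ : lp (fun _ : τ => 𝕜) p → lp (fun _ : τ => 𝕜) p}

theorem fst_apply [DecidableEq τ] (hS : ∀ x a, S x a = x (φ a)) (h : IsTwistedDerivation S ψ χ)
    (x : lp (fun _ : τ => 𝕜) p) (a : τ) :
    ψ x a = (1 - χ (lp.single p (φ a) 1) a) * x (φ a) := by
  have := congrFun
    (h _ x _ ((lp.coeFn_single_eq_mul_single_one x (φ a)).trans (mul_comm _ _))) a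
  simp only [Pi.add_apply, Pi.mul_apply, hS, lp.single_apply_self] at this
  linear_combination -this

theorem snd_apply [DecidableEq τ] (hS : ∀ x a, S x a = x (φ a)) (h : IsTwistedDerivation S ψ χ)
    (x : lp (fun _ : τ => 𝕜) p) (a : τ) :
    χ x a = χ (lp.single p (φ a) 1) a * x (φ a) := by
  have := congrFun (h x _ _ (lp.coeFn_single_eq_mul_single_one x (φ a))) a
  simp only [Pi.add_apply, Pi.mul_apply, hS, lp.single_apply_self, fst_apply hS h] at this
  linear_combination -this

end IsTwistedDerivation

variable [Fact (1 ≤ p)]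

theorem isTwistedDerivation_weightedCompCLM (hφ : ∀ b, (φ ⁻¹' {b}).encard ≤ N)
    {S : lp (fun _ : τ => 𝕜) p → lp (fun _ : τ => 𝕜) p} (hS : ∀ x a, S x a = x (φ a))
    (c : lp (fun _ : τ => 𝕜) ∞) :
    IsTwistedDerivation S (lp.weightedCompCLM 𝕜 p (1 - c) hφ) (lp.weightedCompCLM 𝕜 p c hφ) := by
  intro x y z hz
  funext a
  simp only [Pi.add_apply, Pi.mul_apply, hS, lp.weightedCompCLM_apply, congrFun hz (φ a),
    smul_eq_mul, lp.coeFn_sub, lp.infty_coeFn_one, Pi.sub_apply, Pi.one_apply]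
  ring

noncomputable def twistedDerivationEquiv [DecidableEq τ] (hφ : ∀ b, (φ ⁻¹' {b}).encard ≤ N)
    {S : lp (fun _ : τ => 𝕜) p → lp (fun _ : τ => 𝕜) p} (hS : ∀ x a, S x a = x (φ a)) :
    {q : (lp (fun _ : τ => 𝕜) p →L[𝕜] lp (fun _ : τ => 𝕜) p) ×
        (lp (fun _ : τ => 𝕜) p →L[𝕜] lp (fun _ : τ => 𝕜) p) // IsTwistedDerivation S q.1 q.2} ≃
      lp (fun _ : τ => 𝕜) ∞ where
  toFun q := ⟨fun a => q.1.2 (lp.single p (φ a) 1) a,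
    memℓp_infty ⟨‖q.1.2‖, by rintro - ⟨a, rfl⟩; exact lp.norm_apply_single_one_le _ _ _⟩⟩
  invFun c := ⟨(lp.weightedCompCLM 𝕜 p (1 - c) hφ, lp.weightedCompCLM 𝕜 p c hφ),
    isTwistedDerivation_weightedCompCLM hφ hS c⟩
  left_inv := by
    rintro ⟨⟨ψ, χ⟩, h⟩
    ext x a
    · simp only [lp.weightedCompCLM_apply, h.fst_apply hS, lp.coeFn_sub, lp.infty_coeFn_one]
      rfl
    · exact (h.snd_apply hS x a).symm
  right_inv c := by
    ext a
    simp

end TwistedDerivation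

section Cardinality

open scoped Cardinal

theorem Cardinal.mk_arrow_of_mk_eq_continuum {σ : Type*} [Nonempty σ] {A : Type}
    (hA : #A = 𝔠) : #(σ → A) = 2 ^ max ℵ₀ #σ := by
  rw [mk_arrow, hA, lift_continuum, lift_uzero, ← two_power_aleph0, ← power_mul,
    mul_eq_max_of_aleph0_le_left le_rfl (mk_ne_zero σ)]

theorem Cardinal.mk_lp_infty_complex {τ : Type*} [Nonempty τ] :
    #(lp (fun _ : τ => ℂ) ∞) = 2 ^ max ℵ₀ #τ := by
  apply le_antisymm
  · rw [← Cardinal.mk_arrow_of_mk_eq_continuum Cardinal.mk_complex]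
    exact Cardinal.mk_le_of_injective fun _ _ => lp.ext
  · rw [← Cardinal.mk_arrow_of_mk_eq_continuum (Cardinal.mk_Icc_real zero_lt_one)]
    refine Cardinal.mk_le_of_injective (f := fun t => ⟨fun a => ((t a : ℝ) : ℂ),
      memℓp_infty ⟨1, ?_⟩⟩) fun t t' h => funext fun a => Subtype.ext ?_
    · rintro - ⟨a, rfl⟩
      simpa [abs_of_nonneg (t a).2.1] using (t a).2.2
    · exact Complex.ofReal_injective (congrFun (congrArg Subtype.val h) a)

end Cardinality

/-- The set `ℰ` of pairs `(ψ, λ)` of continuous linear operators on `ℓ^p(τ)` for which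
`σ_φ↾ℓ^p(τ)` is a `(ψ,λ)`-derivation has cardinality `2 ^ max(ℵ₀, card τ)`. -/
theorem stmt_12 (τ : Type*) [Nonempty τ] (p : ℝ≥0∞) [Fact (1 ≤ p)]
    (φ : τ → τ) (N : ℕ) (hφ : ∀ α : τ, (φ ⁻¹' {α}).encard ≤ N)
    (S : lp (fun _ : τ => ℂ) p → lp (fun _ : τ => ℂ) p)
    (hS : ∀ x : lp (fun _ : τ => ℂ) p, ∀ α : τ, S x α = x (φ α)) :
    Cardinal.mk
      {q : (lp (fun _ : τ => ℂ) p →L[ℂ] lp (fun _ : τ => ℂ) p) ×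
           (lp (fun _ : τ => ℂ) p →L[ℂ] lp (fun _ : τ => ℂ) p) //
        ∀ x y z : lp (fun _ : τ => ℂ) p, (⇑z = ⇑x * ⇑y) →
          ⇑(S z) = ⇑(S x) * ⇑(q.1 y) + ⇑(q.2 x) * ⇑(S y)} =
      2 ^ max Cardinal.aleph0 (Cardinal.mk τ) := by
  classical
  exact (Cardinal.mk_congr (twistedDerivationEquiv hφ hS)).trans Cardinal.mk_lp_infty_complex
end

section
/- Let τ be a nonempty set, p ∈ [1,∞], and φ : τ → τ such that there exists N ∈ ℕ with card(φ⁻¹({α})) ≤ N for all α ∈ τ. Let d : ℓ^p(τ) → ℓ^p(τ) be a derivation (a linear map with d(xy) = d(x)·y + x·d(y) for all x, y ∈ ℓ^p(τ)) such that σ_φ(x²) = σ_φ(x)·x + x·d(x) for all x ∈ ℓ^p(τ). Then φ = id_τ, and consequently σ_φ↾ℓ^p(τ) is the identity map of ℓ^p(τ). -/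
open scoped ENNReal

/-!
A derivation kills every idempotent: if `e² = e` then `D = 2eD`, so `eD = 2eD = D` and hence
`D = 2D = 0`. Applied to the indicator `e` of `{φ β}`, the hypothesis at `x = e` reduces to
`σ_φ e = σ_φ e · e`, and evaluating at `β` gives `1 = e β`, i.e. `β = φ β`.
-/

theorem IsIdempotentElem.eq_zero_of_eq_mul_add_mul {R : Type*} [CommRing R] {e D : R}
    (he : IsIdempotentElem e) (hD : D = D * e + e * D) : D = 0 := by
  have hD₂ : D = 2 * (e * D) := by linear_combination hD
  have heD : e * D = D := by linear_combination (e - 1) * hD₂ + 2 * D * he.eq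
  linear_combination -hD₂ - 2 * heD

theorem Pi.isIdempotentElem_single_one {ι R : Type*} [DecidableEq ι] [MulZeroOneClass R]
    (i : ι) : IsIdempotentElem (Pi.single i 1 : ι → R) := by
  simp [IsIdempotentElem, ← Pi.single_mul]

theorem stmt_13_general (τ : Type*) (p : ℝ≥0∞)
    (φ : τ → τ)
    (S : lp (fun _ : τ => ℂ) p → lp (fun _ : τ => ℂ) p)
    (hS : ∀ x : lp (fun _ : τ => ℂ) p, ∀ α : τ, S x α = x (φ α))
    (d : lp (fun _ : τ => ℂ) p →ₗ[ℂ] lp (fun _ : τ => ℂ) p)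
    (hd : ∀ x y z : lp (fun _ : τ => ℂ) p, (⇑z = ⇑x * ⇑y) →
      ⇑(d z) = ⇑(d x) * ⇑y + ⇑x * ⇑(d y))
    (hgen : ∀ x z : lp (fun _ : τ => ℂ) p, (⇑z = ⇑x * ⇑x) →
      ⇑(S z) = ⇑(S x) * ⇑x + ⇑x * ⇑(d x)) :
    φ = id ∧ ∀ x : lp (fun _ : τ => ℂ) p, S x = x := by
  classical
  have hfix : ∀ β, φ β = β := by
    intro β
    set e := lp.single (E := fun _ : τ => ℂ) p (φ β) 1
    have he : IsIdempotentElem (⇑e) := Pi.isIdempotentElem_single_one (φ β)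
    have hde : ⇑(d e) = 0 := he.eq_zero_of_eq_mul_add_mul (hd e e e he.eq.symm)
    have hβ := congrFun (hgen e e he.eq.symm) β
    simpa [hde, hS, e, Pi.single_apply, eq_comm] using hβ
  exact ⟨funext hfix, fun x => lp.ext <| funext fun α => by rw [hS x α, hfix α]⟩

/-- Lemma: if `d` is a derivation on `ℓ^p(τ)` and `σ_φ(x²) = σ_φ(x)·x + x·d(x)` for all
`x ∈ ℓ^p(τ)`, then `φ = id` and hence `σ_φ↾ℓ^p(τ)` is the identity map. -/
theorem stmt_13 (τ : Type*) [Nonempty τ] (p : ℝ≥0∞) [Fact (1 ≤ p)]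
    (φ : τ → τ) (N : ℕ) (hφ : ∀ α : τ, (φ ⁻¹' {α}).encard ≤ N)
    (S : lp (fun _ : τ => ℂ) p → lp (fun _ : τ => ℂ) p)
    (hS : ∀ x : lp (fun _ : τ => ℂ) p, ∀ α : τ, S x α = x (φ α))
    (d : lp (fun _ : τ => ℂ) p →ₗ[ℂ] lp (fun _ : τ => ℂ) p)
    (hd : ∀ x y z : lp (fun _ : τ => ℂ) p, (⇑z = ⇑x * ⇑y) →
      ⇑(d z) = ⇑(d x) * ⇑y + ⇑x * ⇑(d y))
    (hgen : ∀ x z : lp (fun _ : τ => ℂ) p, (⇑z = ⇑x * ⇑x) →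
      ⇑(S z) = ⇑(S x) * ⇑x + ⇑x * ⇑(d x)) :
    φ = id ∧ ∀ x : lp (fun _ : τ => ℂ) p, S x = x :=
  stmt_13_general τ p φ S hS d hd hgen
end

section
/- Let τ be a nonempty set, p ∈ [1,∞], and φ : τ → τ such that there exists N ∈ ℕ with card(φ⁻¹({α})) ≤ N for all α ∈ τ. Let {d_n}_{n≥0} be a sequence of continuous linear operators on ℓ^p(τ) that is a higher derivation, i.e., d_n(xy) = Σ_{i+j=n} d_i(x)·d_j(y) for all x, y ∈ ℓ^p(τ) and all n ≥ 0, and suppose d₀ = σ_φ↾ℓ^p(τ). Then d_n = 0 for every n ≥ 1. -/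
/-!
By strong induction, once `d₁, …, d_{n-1}` vanish the higher Leibniz rule for `d_n` collapses to
`d_n(xy) = σ_φ(x) d_n(y) + d_n(x) σ_φ(y)`, so it suffices that such a twisted derivation `D`
vanishes. Applied to the idempotent `e_α = δ_α` the rule gives `D e_α = 2 σ_φ(e_α) D e_α`,
hence `D e_α = 0`; then evaluating the rule for `x e_α = x(α) e_α` at any `β` with `φ β = α`
gives `(D x)(β) = 0`.
-/

open scoped ENNReal

open Finset in
theorem Finset.Nat.sum_antidiagonal_eq_add_of_eq_zero {M : Type*} [AddCommMonoid M] {n : ℕ}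
    (hn : n ≠ 0) (f : ℕ × ℕ → M) (hf : ∀ ij ∈ antidiagonal n, ij.1 ≠ 0 → ij.2 ≠ 0 → f ij = 0) :
    ∑ ij ∈ antidiagonal n, f ij = f (0, n) + f (n, 0) := by
  refine sum_eq_add_of_mem _ _ (by simp) (by simp) (by simp [hn.symm]) fun ij hij hne => ?_
  refine hf ij hij ?_ ?_ <;> intro h0 <;> rw [HasAntidiagonal.mem_antidiagonal] at hij
  · exact hne.1 (Prod.ext h0 (by omega))
  · exact hne.2 (Prod.ext (by omega) h0)

namespace lp

variable {𝕜 τ : Type*} [NormedField 𝕜] {p : ℝ≥0∞}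

theorem coeFn_single_one_mul_self [DecidableEq τ] (α : τ) :
    ⇑(lp.single (E := fun _ : τ => 𝕜) p α 1) =
      ⇑(lp.single (E := fun _ : τ => 𝕜) p α 1) * ⇑(lp.single (E := fun _ : τ => 𝕜) p α 1) := by
  simp only [lp.coeFn_single, ← Pi.single_mul, mul_one]

theorem coeFn_smul_single_one [DecidableEq τ] (x : lp (fun _ : τ => 𝕜) p) (α : τ) :
    ⇑(x α • lp.single (E := fun _ : τ => 𝕜) p α 1) =
      ⇑x * ⇑(lp.single (E := fun _ : τ => 𝕜) p α 1) := by
  ext β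
  by_cases h : β = α <;> simp [h]

/-- A `(σ_φ, σ_φ)`-derivation of `ℓ^p(τ)`, where `σ_φ x = x ∘ φ` is the generalized shift. -/
def IsShiftDerivation (φ : τ → τ) (D : lp (fun _ : τ => 𝕜) p →ₗ[𝕜] lp (fun _ : τ => 𝕜) p) :
    Prop :=
  ∀ x y z : lp (fun _ : τ => 𝕜) p, ⇑z = ⇑x * ⇑y →
    ⇑(D z) = (⇑x ∘ φ) * ⇑(D y) + ⇑(D x) * (⇑y ∘ φ)

namespace IsShiftDerivation

variable {φ : τ → τ} {D : lp (fun _ : τ => 𝕜) p →ₗ[𝕜] lp (fun _ : τ => 𝕜) p}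

theorem apply_single_one [DecidableEq τ] (hD : IsShiftDerivation φ D) (α : τ) :
    D (lp.single p α 1) = 0 := by
  ext β
  have hβ := congrFun (hD _ _ _ (coeFn_single_one_mul_self α)) β
  by_cases h : φ β = α <;> simpa [h] using hβ

theorem eq_zero (hD : IsShiftDerivation φ D) : D = 0 := by
  classical
  ext x β
  have hβ := congrFun (hD _ _ _ (coeFn_smul_single_one x (φ β))) β
  rw [map_smul, hD.apply_single_one] at hβ
  simpa only [LinearMap.zero_apply, smul_zero, lp.coeFn_zero, mul_zero, Pi.zero_apply,
    Pi.add_apply, Pi.mul_apply, zero_add, Function.comp_apply, lp.single_apply_self,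
    mul_one] using hβ.symm

end IsShiftDerivation

end lp

theorem stmt_17_general (τ : Type*) (p : ℝ≥0∞) [Fact (1 ≤ p)]
    (φ : τ → τ)
    (S : lp (fun _ : τ => ℂ) p →L[ℂ] lp (fun _ : τ => ℂ) p)
    (hS : ∀ x : lp (fun _ : τ => ℂ) p, ∀ α : τ, S x α = x (φ α))
    (d : ℕ → (lp (fun _ : τ => ℂ) p →L[ℂ] lp (fun _ : τ => ℂ) p))
    (hd0 : d 0 = S)
    (hhigher : ∀ n : ℕ, ∀ x y z : lp (fun _ : τ => ℂ) p, (⇑z = ⇑x * ⇑y) →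
      ⇑(d n z) = ∑ ij ∈ Finset.HasAntidiagonal.antidiagonal n, ⇑(d ij.1 x) * ⇑(d ij.2 y)) :
    ∀ n : ℕ, 1 ≤ n → d n = 0 := by
  have hd0_apply (x : lp (fun _ : τ => ℂ) p) : ⇑(d 0 x) = ⇑x ∘ φ := funext (hd0 ▸ hS x)
  intro n
  induction n using Nat.strong_induction_on with
  | _ n ih =>
  intro hn
  have hD : lp.IsShiftDerivation φ (d n : lp (fun _ : τ => ℂ) p →ₗ[ℂ] lp (fun _ : τ => ℂ) p) := by
    intro x y z hz
    simp only [ContinuousLinearMap.coe_coe]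
    rw [hhigher n x y z hz, Finset.Nat.sum_antidiagonal_eq_add_of_eq_zero (by omega),
      hd0_apply, hd0_apply]
    intro ij hij hi hj
    rw [Finset.HasAntidiagonal.mem_antidiagonal] at hij
    rw [ih ij.1 (by omega) (by omega), zero_apply, lp.coeFn_zero, zero_mul]
  exact ContinuousLinearMap.coe_injective hD.eq_zero

/-- If `(d_n)_{n ≥ 0}` is a higher derivation consisting of continuous linear operators
on `ℓ^p(τ)` (i.e. `d_n(xy) = Σ_{i+j=n} d_i(x)·d_j(y)`) with `d_0 = σ_φ↾ℓ^p(τ)`, then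
`d_n = 0` for all `n ≥ 1`. -/
theorem stmt_17 (τ : Type*) [Nonempty τ] (p : ℝ≥0∞) [Fact (1 ≤ p)]
    (φ : τ → τ) (N : ℕ) (hφ : ∀ α : τ, (φ ⁻¹' {α}).encard ≤ N)
    (S : lp (fun _ : τ => ℂ) p →L[ℂ] lp (fun _ : τ => ℂ) p)
    (hS : ∀ x : lp (fun _ : τ => ℂ) p, ∀ α : τ, S x α = x (φ α))
    (d : ℕ → (lp (fun _ : τ => ℂ) p →L[ℂ] lp (fun _ : τ => ℂ) p))
    (hd0 : d 0 = S)
    (hhigher : ∀ n : ℕ, ∀ x y z : lp (fun _ : τ => ℂ) p, (⇑z = ⇑x * ⇑y) →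
      ⇑(d n z) = ∑ ij ∈ Finset.HasAntidiagonal.antidiagonal n, ⇑(d ij.1 x) * ⇑(d ij.2 y)) :
    ∀ n : ℕ, 1 ≤ n → d n = 0 :=
  stmt_17_general τ p φ S hS d hd0 hhigher
end
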